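/- (Fidelity triangle-type bound) For any density matrices ρ_{AB} on H_A ⊗ H_B, σ_A on H_A, and χ_B on H_B, one has F(ρ_{AB}, σ_A ⊗ ρ_B) ≥ F(ρ_{AB}, σ_A ⊗ χ_B)², where ρ_B = tr_A ρ_{AB}. -/

import Mathlib

/-!
Write `F(ρ, σ ⊗ χ) = ‖√ρ (√σ ⊗ √χ)‖₁ = tr (√ρ (√σ ⊗ √χ) U)` for a contraction `U` and put
`G = tr_A ((√σ ⊗ 1) U √ρ)`. Then `F(ρ, σ ⊗ χ) = tr (√χ G)`, and Cauchy–Schwarz together with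
`tr χ = 1` gives `F(ρ, σ ⊗ χ)² ≤ tr (G† G)`.

Since `tr_A ((√σ ⊗ 1) U U† (√σ ⊗ 1)) ≤ tr_A (σ ⊗ 1) = 1`, the operator Cauchy–Schwarz inequality
for the partial trace gives `G† G ≤ ρ_B`, so by Douglas' lemma `G = C √ρ_B` for a contraction `C`.
Hence `tr (G† G) = tr (√ρ (√σ ⊗ √ρ_B) (1 ⊗ C†) U) ≤ ‖√ρ (√σ ⊗ √ρ_B)‖₁ = F(ρ, σ ⊗ ρ_B)`.
-/

open scoped Kronecker ComplexOrder ENNReal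
open Matrix

noncomputable section

namespace QIT

variable {n m A B C X : Type*} [Fintype n] [DecidableEq n] [Fintype m] [DecidableEq m]
  [Fintype A] [DecidableEq A] [Fintype B] [DecidableEq B] [Fintype C] [DecidableEq C]
  [Fintype X] [DecidableEq X]

/-- Real power of a matrix via the spectral decomposition (junk value `0` if not Hermitian). -/
def matRpow (M : Matrix n n ℂ) (p : ℝ) : Matrix n n ℂ :=
  if h : M.IsHermitian then
    (h.eigenvectorUnitary : Matrix n n ℂ) *
      Matrix.diagonal (fun i => ((h.eigenvalues i ^ p : ℝ) : ℂ)) *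
      (star (h.eigenvectorUnitary : Matrix n n ℂ))
  else 0

/-- Base-2 matrix logarithm via the spectral decomposition. -/
def matLog (M : Matrix n n ℂ) : Matrix n n ℂ :=
  if h : M.IsHermitian then
    (h.eigenvectorUnitary : Matrix n n ℂ) *
      Matrix.diagonal (fun i => ((Real.logb 2 (h.eigenvalues i) : ℝ) : ℂ)) *
      (star (h.eigenvectorUnitary : Matrix n n ℂ))
  else 0

/-- `tr (M ^ p)` for a Hermitian matrix `M`, via eigenvalues. -/
def traceRpow (p : ℝ) (M : Matrix n n ℂ) : ℝ :=
  if h : M.IsHermitian then ∑ i, h.eigenvalues i ^ p else 0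

/-- The singular values of a matrix: square roots of eigenvalues of `Mᴴ M`. -/
def singularValues (M : Matrix n n ℂ) : n → ℝ :=
  fun i => Real.sqrt ((Matrix.posSemidef_conjTranspose_mul_self M).1.eigenvalues i)

/-- The trace norm `‖M‖₁ = tr |M|`. -/
def traceNorm (M : Matrix n n ℂ) : ℝ := ∑ i, singularValues M i

/-- The Schatten `p`-norm (quasinorm for `p < 1`) for a real exponent `p`. -/
def schattenNorm (p : ℝ) (M : Matrix n n ℂ) : ℝ :=
  (∑ i, singularValues M i ^ p) ^ (1 / p)

/-- The Schatten `p`-norm with exponent in `[1, ∞]`; for `p = ∞` it is the operator norm,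
i.e. the largest singular value. -/
def schattenNormE (p : ℝ≥0∞) (M : Matrix n n ℂ) : ℝ :=
  if p = ∞ then ⨆ i, singularValues M i else schattenNorm p.toReal M

/-- The fidelity `F(ρ,σ) = ‖√ρ √σ‖₁`. -/
def fidelity (ρ σ : Matrix n n ℂ) : ℝ :=
  traceNorm (matRpow ρ (1 / 2) * matRpow σ (1 / 2))

/-- The Rényi entropy of order `α` (base-2 logarithm). -/
def renyiEntropy (α : ℝ) (ρ : Matrix n n ℂ) : ℝ :=
  (1 - α)⁻¹ * Real.logb 2 (traceRpow α ρ)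

/-- The quantum relative entropy `tr [ρ (log ρ - log σ)]` (base-2 logarithms). -/
def relEntropy (ρ σ : Matrix n n ℂ) : ℝ :=
  ((ρ * (matLog ρ - matLog σ)).trace).re

/-- The sandwiched Rényi divergence of order `α`, equal to the quantum relative entropy
at `α = 1`. -/
def sandwichedRenyi (α : ℝ) (ρ σ : Matrix n n ℂ) : ℝ :=
  if α = 1 then relEntropy ρ σ
  else (α - 1)⁻¹ *
    Real.logb 2 (traceRpow α (matRpow σ ((1 - α) / (2 * α)) * ρ * matRpow σ ((1 - α) / (2 * α))))

/-- `ρ` is a density matrix. -/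
def IsDensity (ρ : Matrix n n ℂ) : Prop := ρ.PosSemidef ∧ ρ.trace = 1

/-- Partial trace over the second tensor factor. -/
def ptraceSnd (M : Matrix (A × B) (A × B) ℂ) : Matrix A A ℂ :=
  Matrix.of fun i j => ∑ k, M (i, k) (j, k)

/-- Partial trace over the first tensor factor. -/
def ptraceFst (M : Matrix (A × B) (A × B) ℂ) : Matrix B B ℂ :=
  Matrix.of fun i j => ∑ k, M (k, i) (k, j)

/-- The Rényi conditional entropy `S̃_α(A|B)_ρ = - min_{τ_B} D̃_α(ρ_{AB} ‖ I_A ⊗ τ_B)`. -/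
def condRenyi (α : ℝ) (ρ : Matrix (A × B) (A × B) ℂ) : ℝ :=
  - sInf {x : ℝ | ∃ τ : Matrix B B ℂ, τ.PosSemidef ∧ τ.trace = 1 ∧
      x = sandwichedRenyi α ρ ((1 : Matrix A A ℂ) ⊗ₖ τ)}

/-- The Rényi mutual information `Ĩ_α(A;B)_ρ = min_{τ_B} D̃_α(ρ_{AB} ‖ ρ_A ⊗ τ_B)`. -/
def mutualRenyi (α : ℝ) (ρ : Matrix (A × B) (A × B) ℂ) : ℝ :=
  sInf {x : ℝ | ∃ τ : Matrix B B ℂ, τ.PosSemidef ∧ τ.trace = 1 ∧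
      x = sandwichedRenyi α ρ (ptraceSnd ρ ⊗ₖ τ)}

open scoped MatrixOrder Matrix.Norms.L2Operator

section Contraction

theorem norm_le_one_iff_conjTranspose_mul_self_le_one {κ ι : Type*} [Fintype κ] [Fintype ι]
    [DecidableEq ι] {R : Matrix κ ι ℂ} : ‖R‖ ≤ 1 ↔ Rᴴ * R ≤ 1 := by
  rw [← sq_le_one_iff₀ (norm_nonneg _), sq, ← Matrix.l2_opNorm_conjTranspose_mul_self,
    CStarAlgebra.norm_le_one_iff_of_nonneg _ (Matrix.posSemidef_conjTranspose_mul_self R).nonneg]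

variable {ι : Type*} [Fintype ι] [DecidableEq ι]

theorem cfc_mul_cfc (f g : ℝ → ℝ) (P : Matrix ι ι ℂ) :
    cfc f P * cfc g P = cfc (fun x => f x * g x) P :=
  (cfc_mul f g P (P.finite_real_spectrum.continuousOn f)
    (P.finite_real_spectrum.continuousOn g)).symm

-- Since `0⁻¹ = 0`, `cfc (·⁻¹) P` is the Moore–Penrose pseudo-inverse of `P`.
theorem cfc_inv_mul_self_mul_cfc_inv {P : Matrix ι ι ℂ} (hP : IsSelfAdjoint P) :
    cfc (·⁻¹ : ℝ → ℝ) P * P * cfc (·⁻¹ : ℝ → ℝ) P = cfc (·⁻¹ : ℝ → ℝ) P :=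
  calc cfc (·⁻¹ : ℝ → ℝ) P * P * cfc (·⁻¹ : ℝ → ℝ) P
      = cfc (·⁻¹ : ℝ → ℝ) P * cfc (fun x => x) P * cfc (·⁻¹ : ℝ → ℝ) P := by rw [cfc_id' ℝ P]
    _ = cfc (·⁻¹ : ℝ → ℝ) P := by
      rw [cfc_mul_cfc, cfc_mul_cfc]
      congr 1 with x
      simpa using mul_inv_mul_cancel x⁻¹

theorem mul_cfc_inv_mul_self {P : Matrix ι ι ℂ} (hP : IsSelfAdjoint P) :
    P * cfc (·⁻¹ : ℝ → ℝ) P * P = P :=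
  calc P * cfc (·⁻¹ : ℝ → ℝ) P * P
      = cfc (fun x => x) P * cfc (·⁻¹ : ℝ → ℝ) P * cfc (fun x => x) P := by rw [cfc_id' ℝ P]
    _ = P := by simpa only [cfc_mul_cfc, mul_inv_mul_cancel] using cfc_id' ℝ P

-- `cfc (·⁻¹) P * P` is the projection onto the range of `P`.
theorem mul_cfc_inv_mul_eq_self_of_star_mul_self_le {G P : Matrix ι ι ℂ} (h : star G * G ≤ P) :
    G * (cfc (·⁻¹ : ℝ → ℝ) P * P) = G := by
  have hP : IsSelfAdjoint P := by
    simpa using (IsSelfAdjoint.star_mul_self G).add (sub_nonneg.mpr h).isSelfAdjoint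
  set D := 1 - cfc (·⁻¹ : ℝ → ℝ) P * P
  have hD : IsSelfAdjoint D := by
    have hQP : cfc (·⁻¹ : ℝ → ℝ) P * P = cfc (fun x : ℝ => x⁻¹ * x) P :=
      calc cfc (·⁻¹ : ℝ → ℝ) P * P = cfc (·⁻¹ : ℝ → ℝ) P * cfc (fun x => x) P := by
            rw [cfc_id' ℝ P]
        _ = _ := cfc_mul_cfc _ _ _
    exact (IsSelfAdjoint.one _).sub (hQP ▸ cfc_predicate _ _)
  have hPD : P * D = 0 := by
    simp only [D, mul_sub, mul_one, ← mul_assoc, mul_cfc_inv_mul_self hP, sub_self]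
  have h0 : star (G * D) * (G * D) ≤ 0 :=
    calc star (G * D) * (G * D) = star D * (star G * G) * D := by simp only [star_mul, mul_assoc]
      _ ≤ star D * P * D := star_left_conjugate_le_conjugate h D
      _ = 0 := by rw [hD.star_eq, mul_assoc, hPD, mul_zero]
  have hGD := (CStarRing.star_mul_self_eq_zero_iff (G * D)).mp
    (le_antisymm h0 (star_mul_self_nonneg _))
  rwa [mul_sub, mul_one, sub_eq_zero, eq_comm] at hGD

-- Douglas' factorization lemma.
theorem exists_norm_le_one_eq_mul_of_star_mul_self_le {G H : Matrix ι ι ℂ}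
    (h : star G * G ≤ star H * H) : ∃ C : Matrix ι ι ℂ, ‖C‖ ≤ 1 ∧ G = C * H := by
  set Q := cfc (·⁻¹ : ℝ → ℝ) (star H * H)
  have hQ : IsSelfAdjoint Q := cfc_predicate _ _
  have hQPQ : Q * (star H * H) * Q = Q :=
    cfc_inv_mul_self_mul_cfc_inv (.star_mul_self H)
  have hE : IsStarProjection (H * Q * star H) := by
    refine ⟨?_, by simp [IsSelfAdjoint, mul_assoc, hQ.star_eq]⟩
    calc H * Q * star H * (H * Q * star H) = H * (Q * (star H * H) * Q) * star H := by
          simp only [mul_assoc]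
      _ = H * Q * star H := by rw [hQPQ, mul_assoc]
  refine ⟨G * Q * star H, ?_, ?_⟩
  · rw [norm_le_one_iff_conjTranspose_mul_self_le_one]
    calc star (G * Q * star H) * (G * Q * star H)
        = star (Q * star H) * (star G * G) * (Q * star H) := by simp [mul_assoc, hQ.star_eq]
      _ ≤ star (Q * star H) * (star H * H) * (Q * star H) :=
          star_left_conjugate_le_conjugate h _
      _ = H * (Q * (star H * H) * Q) * star H := by simp [mul_assoc, hQ.star_eq]
      _ = H * Q * star H := by rw [hQPQ, mul_assoc]
      _ ≤ 1 := hE.le_one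
  · simp only [mul_assoc]
    rw [mul_cfc_inv_mul_eq_self_of_star_mul_self_le h]

end Contraction

section TraceNorm

variable {ι : Type*} [Fintype ι]

theorem re_trace_le_re_trace {X Y : Matrix ι ι ℂ} (h : X ≤ Y) : X.trace.re ≤ Y.trace.re :=
  (Complex.le_def.mp ((Matrix.tracePositiveLinearMap ι ℂ ℂ).monotone h)).1

variable [DecidableEq ι]

theorem sq_norm_trace_star_mul_le (X Y : Matrix ι ι ℂ) :
    ‖(star X * Y).trace‖ ^ 2 ≤ (star X * X).trace.re * (star Y * Y).trace.re := by
  let f := Matrix.tracePositiveLinearMap ι ℂ ℂ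
  have hsq (Z : Matrix ι ι ℂ) : ‖f.toPreGNS Z‖ ^ 2 = (star Z * Z).trace.re := by
    simpa [f, ← Complex.ofReal_pow] using congrArg Complex.re (f.preGNS_norm_sq (f.toPreGNS Z))
  calc ‖(star X * Y).trace‖ ^ 2 ≤ (‖f.toPreGNS X‖ * ‖f.toPreGNS Y‖) ^ 2 := by
        gcongr; exact norm_inner_le_norm (𝕜 := ℂ) (f.toPreGNS X) (f.toPreGNS Y)
    _ = _ := by rw [mul_pow, hsq, hsq]

theorem traceNorm_nonneg (M : Matrix ι ι ℂ) : 0 ≤ traceNorm M :=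
  Finset.sum_nonneg fun _ _ => Real.sqrt_nonneg _

theorem ofReal_traceNorm (M : Matrix ι ι ℂ) : (traceNorm M : ℂ) = (CFC.abs M).trace := by
  have h := (Matrix.posSemidef_conjTranspose_mul_self M).isHermitian
  rw [CFC.abs, CFC.sqrt_eq_real_sqrt _ (star_mul_self_nonneg M), Matrix.star_eq_conjTranspose,
    cfcₙ_eq_cfc, h.cfc_eq, Matrix.IsHermitian.cfc, Unitary.conjStarAlgAut_apply,
    Matrix.trace_mul_cycle, Unitary.coe_star_mul_self, one_mul, Matrix.trace_diagonal, traceNorm]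
  simp [singularValues]

-- With the polar decomposition `M = V |M|`, `tr (M K) = tr (|M|^½ · K V |M|^½)`; apply
-- Cauchy–Schwarz and use that `K V` is a contraction.
theorem norm_trace_mul_le_traceNorm (M K : Matrix ι ι ℂ) (hK : ‖K‖ ≤ 1) :
    ‖(M * K).trace‖ ≤ traceNorm M := by
  have habs : IsSelfAdjoint (CFC.abs M) := .of_nonneg (CFC.abs_nonneg M)
  obtain ⟨V, hV, hMV⟩ := exists_norm_le_one_eq_mul_of_star_mul_self_le
    (G := M) (H := CFC.abs M) (by rw [habs.star_eq, CFC.abs_mul_abs])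
  set R := CFC.sqrt (CFC.abs M)
  have hR : IsSelfAdjoint R := .of_nonneg (CFC.sqrt_nonneg _)
  have hRR : R * R = CFC.abs M := CFC.sqrt_mul_sqrt_self _ (CFC.abs_nonneg M)
  have htrRR : (star R * R).trace.re = traceNorm M := by
    rw [hR.star_eq, hRR, ← ofReal_traceNorm, Complex.ofReal_re]
  have hKV : star (K * V) * (K * V) ≤ 1 :=
    norm_le_one_iff_conjTranspose_mul_self_le_one.mp
      ((norm_mul_le K V).trans (mul_le_one₀ hK (norm_nonneg V) hV))
  have hbound : (star (K * V * R) * (K * V * R)).trace.re ≤ traceNorm M :=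
    calc (star (K * V * R) * (K * V * R)).trace.re
        = (star R * (star (K * V) * (K * V)) * R).trace.re := by simp [mul_assoc]
      _ ≤ (star R * 1 * R).trace.re :=
          re_trace_le_re_trace (star_left_conjugate_le_conjugate hKV R)
      _ = traceNorm M := by rw [mul_one, htrRR]
  have htr : (M * K).trace = (star R * (K * V * R)).trace := by
    rw [hMV, ← hRR, hR.star_eq, Matrix.trace_mul_cycle, ← mul_assoc,
      Matrix.trace_mul_comm (K * V * R)]
  have hcs := sq_norm_trace_star_mul_le R (K * V * R)
  rw [← htr, htrRR] at hcs
  nlinarith [norm_nonneg (M * K).trace, traceNorm_nonneg M]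

theorem exists_norm_le_one_trace_mul_eq_traceNorm (M : Matrix ι ι ℂ) :
    ∃ U : Matrix ι ι ℂ, ‖U‖ ≤ 1 ∧ (M * U).trace = traceNorm M := by
  have habs : IsSelfAdjoint (CFC.abs M) := .of_nonneg (CFC.abs_nonneg M)
  obtain ⟨U, hU, hUM⟩ := exists_norm_le_one_eq_mul_of_star_mul_self_le
    (G := CFC.abs M) (H := M) (by rw [habs.star_eq, CFC.abs_mul_abs])
  exact ⟨U, hU, by rw [Matrix.trace_mul_comm, ← hUM, ofReal_traceNorm]⟩

end TraceNorm

section PartialTrace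

variable {α β γ : Type*} [Fintype α]

def unfoldFst (X : Matrix (α × β) γ ℂ) : Matrix β (α × γ) ℂ :=
  Matrix.of fun b q => X (q.1, b) q.2

theorem unfoldFst_mul_conjTranspose [Fintype γ] (X Y : Matrix (α × β) γ ℂ) :
    unfoldFst X * (unfoldFst Y)ᴴ = ptraceFst (X * Yᴴ) := by
  ext b b'
  simp [unfoldFst, ptraceFst, Matrix.mul_apply, Fintype.sum_prod_type]

theorem ptraceFst_sub (X Y : Matrix (α × β) (α × β) ℂ) :
    ptraceFst (X - Y) = ptraceFst X - ptraceFst Y := by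
  ext b b'
  simp [ptraceFst, Finset.sum_sub_distrib]

theorem ptraceFst_kronecker (X : Matrix α α ℂ) (Y : Matrix β β ℂ) :
    ptraceFst (X ⊗ₖ Y) = X.trace • Y := by
  ext b b'
  simp [ptraceFst, Matrix.trace, Finset.sum_mul]

variable [Fintype β]

theorem trace_one_kronecker_mul [DecidableEq α] (M : Matrix β β ℂ)
    (Y : Matrix (α × β) (α × β) ℂ) : ((1 ⊗ₖ M) * Y).trace = (M * ptraceFst Y).trace := by
  simp only [Matrix.trace, Matrix.diag, Matrix.mul_apply, ptraceFst, Matrix.kroneckerMap_apply,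
    Matrix.one_apply, Matrix.of_apply, Fintype.sum_prod_type, Finset.mul_sum]
  simp [ite_mul]
  rw [Finset.sum_comm]
  exact Finset.sum_congr rfl fun _ _ => Finset.sum_comm

variable [DecidableEq α] [DecidableEq β]

theorem ptraceFst_nonneg {X : Matrix (α × β) (α × β) ℂ} (h : 0 ≤ X) : 0 ≤ ptraceFst X := by
  obtain ⟨Z, rfl⟩ := CStarAlgebra.nonneg_iff_eq_star_mul_self.mp h
  rw [Matrix.star_eq_conjTranspose, ← Matrix.conjTranspose_conjTranspose Z,
    Matrix.conjTranspose_conjTranspose Zᴴ, ← unfoldFst_mul_conjTranspose]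
  exact (Matrix.posSemidef_self_mul_conjTranspose _).nonneg

theorem ptraceFst_mono {X Y : Matrix (α × β) (α × β) ℂ} (h : X ≤ Y) :
    ptraceFst X ≤ ptraceFst Y := by
  rw [← sub_nonneg, ← ptraceFst_sub]
  exact ptraceFst_nonneg (sub_nonneg.mpr h)

theorem conjTranspose_mul_self_ptraceFst_le [Fintype γ] [DecidableEq γ]
    {X Y : Matrix (α × β) γ ℂ} (hX : ptraceFst (X * Xᴴ) ≤ 1) :
    (ptraceFst (X * Yᴴ))ᴴ * ptraceFst (X * Yᴴ) ≤ ptraceFst (Y * Yᴴ) := by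
  set R := unfoldFst X
  set S := unfoldFst Y
  have hR : Rᴴ * R ≤ 1 := by
    rw [← norm_le_one_iff_conjTranspose_mul_self_le_one, ← Matrix.l2_opNorm_conjTranspose,
      norm_le_one_iff_conjTranspose_mul_self_le_one, Matrix.conjTranspose_conjTranspose,
      unfoldFst_mul_conjTranspose]
    exact hX
  rw [← unfoldFst_mul_conjTranspose, ← unfoldFst_mul_conjTranspose, Matrix.le_iff]
  convert (Matrix.le_iff.mp hR).mul_mul_conjTranspose_same S using 1
  simp only [R, S, Matrix.conjTranspose_mul, Matrix.conjTranspose_conjTranspose, Matrix.mul_sub,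
    Matrix.sub_mul, Matrix.one_mul, Matrix.mul_assoc]

theorem norm_one_kronecker_le_one {C : Matrix β β ℂ} (hC : ‖C‖ ≤ 1) :
    ‖(1 : Matrix α α ℂ) ⊗ₖ C‖ ≤ 1 := by
  rw [norm_le_one_iff_conjTranspose_mul_self_le_one] at hC ⊢
  rw [Matrix.conjTranspose_kronecker, Matrix.conjTranspose_one, ← Matrix.mul_kronecker_mul,
    Matrix.one_mul]
  calc (1 : Matrix α α ℂ) ⊗ₖ (Cᴴ * C)
      ≤ 1 ⊗ₖ (Cᴴ * C) + 1 ⊗ₖ (1 - Cᴴ * C) :=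
        le_add_of_nonneg_right (Matrix.PosSemidef.one.kronecker (Matrix.le_iff.mp hC)).nonneg
    _ = 1 := by rw [← Matrix.kronecker_add, add_sub_cancel, Matrix.one_kronecker_one]

theorem sqrt_kronecker {X : Matrix α α ℂ} {Y : Matrix β β ℂ} (hX : 0 ≤ X) (hY : 0 ≤ Y) :
    CFC.sqrt (X ⊗ₖ Y) = CFC.sqrt X ⊗ₖ CFC.sqrt Y := by
  rw [CFC.sqrt_eq_iff _ _ (hX.posSemidef.kronecker hY.posSemidef).nonneg
    ((CFC.sqrt_nonneg X).posSemidef.kronecker (CFC.sqrt_nonneg Y).posSemidef).nonneg,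
    ← Matrix.mul_kronecker_mul, CFC.sqrt_mul_sqrt_self X, CFC.sqrt_mul_sqrt_self Y]

end PartialTrace

section Fidelity

theorem matRpow_one_half {ι : Type*} [Fintype ι] [DecidableEq ι] {S : Matrix ι ι ℂ} (hS : 0 ≤ S) :
    matRpow S (1 / 2) = CFC.sqrt S := by
  rw [matRpow, dif_pos hS.posSemidef.isHermitian, CFC.sqrt_eq_real_sqrt S hS, cfcₙ_eq_cfc,
    hS.posSemidef.isHermitian.cfc_eq, Matrix.IsHermitian.cfc, Unitary.conjStarAlgAut_apply]
  congr 3 with i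
  simp [Real.sqrt_eq_rpow]

theorem fidelity_eq_traceNorm {ι : Type*} [Fintype ι] [DecidableEq ι] {ρ σ : Matrix ι ι ℂ}
    (hρ : 0 ≤ ρ) (hσ : 0 ≤ σ) : fidelity ρ σ = traceNorm (CFC.sqrt ρ * CFC.sqrt σ) := by
  rw [fidelity, matRpow_one_half hρ, matRpow_one_half hσ]

variable {α β : Type*} [Fintype α] [DecidableEq α] [Fintype β] [DecidableEq β]

theorem sq_norm_trace_one_kronecker_sqrt_mul_le {χ : Matrix β β ℂ} (hχ : 0 ≤ χ)
    (Y : Matrix (α × β) (α × β) ℂ) :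
    ‖((1 ⊗ₖ CFC.sqrt χ) * Y).trace‖ ^ 2 ≤
      χ.trace.re * (star (ptraceFst Y) * ptraceFst Y).trace.re := by
  have hs : IsSelfAdjoint (CFC.sqrt χ) := .of_nonneg (CFC.sqrt_nonneg χ)
  simpa [trace_one_kronecker_mul, hs.star_eq, CFC.sqrt_mul_sqrt_self χ hχ] using
    sq_norm_trace_star_mul_le (CFC.sqrt χ) (ptraceFst Y)

theorem ptraceFst_sqrt_kronecker_one_mul_le_one {σ : Matrix α α ℂ} (hσ : 0 ≤ σ)
    (hσ1 : σ.trace = 1) {U : Matrix (α × β) (α × β) ℂ} (hU : ‖U‖ ≤ 1) :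
    ptraceFst ((CFC.sqrt σ ⊗ₖ 1) * U * ((CFC.sqrt σ ⊗ₖ 1) * U)ᴴ) ≤ 1 := by
  set S := CFC.sqrt σ ⊗ₖ (1 : Matrix β β ℂ) with hS
  have hUU : U * Uᴴ ≤ 1 := by
    simpa using norm_le_one_iff_conjTranspose_mul_self_le_one.mp
      ((Matrix.l2_opNorm_conjTranspose U).trans_le hU)
  have hSS : S * star S = σ ⊗ₖ 1 := by
    have hsσ : (CFC.sqrt σ)ᴴ = CFC.sqrt σ := (IsSelfAdjoint.of_nonneg (CFC.sqrt_nonneg σ)).star_eq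
    rw [hS, Matrix.star_eq_conjTranspose, Matrix.conjTranspose_kronecker, hsσ,
      Matrix.conjTranspose_one,
      ← Matrix.mul_kronecker_mul, CFC.sqrt_mul_sqrt_self σ, one_mul]
  calc ptraceFst (S * U * (S * U)ᴴ) ≤ ptraceFst (σ ⊗ₖ (1 : Matrix β β ℂ)) := by
        refine ptraceFst_mono ?_
        calc S * U * (S * U)ᴴ = S * (U * Uᴴ) * star S := by
              simp only [Matrix.conjTranspose_mul, Matrix.star_eq_conjTranspose, mul_assoc]
          _ ≤ S * 1 * star S := star_right_conjugate_le_conjugate hUU _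
          _ = σ ⊗ₖ 1 := by rw [mul_one, hSS]
    _ = 1 := by rw [ptraceFst_kronecker, hσ1, one_smul]

theorem re_trace_star_mul_self_ptraceFst_le {ρ : Matrix (α × β) (α × β) ℂ} {σ : Matrix α α ℂ}
    (hρ : 0 ≤ ρ) (hσ : 0 ≤ σ) (hσ1 : σ.trace = 1) {U : Matrix (α × β) (α × β) ℂ} (hU : ‖U‖ ≤ 1) :
    let G := ptraceFst ((CFC.sqrt σ ⊗ₖ 1) * U * CFC.sqrt ρ)
    (star G * G).trace.re ≤
      traceNorm (CFC.sqrt ρ * (CFC.sqrt σ ⊗ₖ CFC.sqrt (ptraceFst ρ))) := by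
  intro G
  set sρ := CFC.sqrt ρ
  set sσ := CFC.sqrt σ
  set sβ := CFC.sqrt (ptraceFst ρ)
  set W := (sσ ⊗ₖ (1 : Matrix β β ℂ)) * U
  have hsρ : sρᴴ = sρ := (IsSelfAdjoint.of_nonneg (CFC.sqrt_nonneg ρ)).star_eq
  have hsβ : star sβ = sβ := (IsSelfAdjoint.of_nonneg (CFC.sqrt_nonneg _)).star_eq
  have hW : ptraceFst (W * Wᴴ) ≤ 1 := ptraceFst_sqrt_kronecker_one_mul_le_one hσ hσ1 hU
  have hG : star G * G ≤ star sβ * sβ := by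
    have := conjTranspose_mul_self_ptraceFst_le (Y := sρ) hW
    rw [hsρ, CFC.sqrt_mul_sqrt_self ρ,
      ← CFC.sqrt_mul_sqrt_self (ptraceFst ρ) (ptraceFst_nonneg hρ)] at this
    rwa [hsβ]
  obtain ⟨C, hC, hGC⟩ := exists_norm_le_one_eq_mul_of_star_mul_self_le hG
  have htr : (star G * G).trace = (sρ * (sσ ⊗ₖ sβ) * ((1 ⊗ₖ star C) * U)).trace :=
    calc (star G * G).trace = ((1 ⊗ₖ star G) * (W * sρ)).trace :=
          (trace_one_kronecker_mul _ _).symm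
      _ = ((1 ⊗ₖ (sβ * star C)) * (sσ ⊗ₖ 1) * U * sρ).trace := by
          rw [hGC, star_mul, hsβ]; simp only [W, mul_assoc]
      _ = ((sσ ⊗ₖ sβ) * (1 ⊗ₖ star C) * U * sρ).trace := by
          rw [← Matrix.mul_kronecker_mul, ← Matrix.mul_kronecker_mul]; simp
      _ = _ := by rw [Matrix.trace_mul_comm]; simp only [mul_assoc]
  calc (star G * G).trace.re ≤ ‖(star G * G).trace‖ := Complex.re_le_norm _
    _ ≤ _ := htr ▸ norm_trace_mul_le_traceNorm _ _ ((norm_mul_le _ _).trans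
        (mul_le_one₀ (norm_one_kronecker_le_one (by rwa [norm_star])) (norm_nonneg U) hU))

end Fidelity

/-- Fidelity triangle-type bound:
`F(ρ_{AB}, σ_A ⊗ ρ_B) ≥ F(ρ_{AB}, σ_A ⊗ χ_B)²` where `ρ_B = tr_A ρ_{AB}`. -/
theorem fidelity_marginal_bound (ρ : Matrix (A × B) (A × B) ℂ) (σ : Matrix A A ℂ)
    (χ : Matrix B B ℂ) (hρ : IsDensity ρ) (hσ : IsDensity σ) (hχ : IsDensity χ) :
    fidelity ρ (σ ⊗ₖ ptraceFst ρ) ≥ (fidelity ρ (σ ⊗ₖ χ)) ^ 2 := by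
  have hρ0 : 0 ≤ ρ := hρ.1.nonneg
  have hβ0 : 0 ≤ ptraceFst ρ := ptraceFst_nonneg hρ0
  rw [ge_iff_le, fidelity_eq_traceNorm hρ0 (hσ.1.kronecker hβ0.posSemidef).nonneg,
    fidelity_eq_traceNorm hρ0 (hσ.1.kronecker hχ.1).nonneg, sqrt_kronecker hσ.1.nonneg hβ0,
    sqrt_kronecker hσ.1.nonneg hχ.1.nonneg]
  obtain ⟨U, hU, hXU⟩ := exists_norm_le_one_trace_mul_eq_traceNorm
    (CFC.sqrt ρ * (CFC.sqrt σ ⊗ₖ CFC.sqrt χ))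
  have hY : (CFC.sqrt ρ * (CFC.sqrt σ ⊗ₖ CFC.sqrt χ) * U).trace =
      ((1 ⊗ₖ CFC.sqrt χ) * ((CFC.sqrt σ ⊗ₖ 1) * U * CFC.sqrt ρ)).trace := by
    rw [← Matrix.mul_assoc, ← Matrix.mul_assoc, ← Matrix.mul_kronecker_mul, Matrix.one_mul,
      Matrix.mul_one, Matrix.trace_mul_comm _ (CFC.sqrt ρ), Matrix.mul_assoc]
  calc traceNorm (CFC.sqrt ρ * (CFC.sqrt σ ⊗ₖ CFC.sqrt χ)) ^ 2
      = ‖((1 ⊗ₖ CFC.sqrt χ) * ((CFC.sqrt σ ⊗ₖ 1) * U * CFC.sqrt ρ)).trace‖ ^ 2 := by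
        rw [← hY, hXU, Complex.norm_real, Real.norm_of_nonneg (traceNorm_nonneg _)]
    _ ≤ χ.trace.re * _ := sq_norm_trace_one_kronecker_sqrt_mul_le hχ.1.nonneg _
    _ ≤ _ := by
        rw [hχ.2, Complex.one_re, one_mul]
        exact re_trace_star_mul_self_ptraceFst_le hρ0 hσ.1.nonneg hσ.2 hU

end QIT
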